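/- arXiv:2502.02669 — 2 statements merged into one kernel-verified Lean document; each statement's English description precedes it below -/
import Mathlib

section
/- Let V: [t_*, t₀+T) → ℝ be a positive differentiable function satisfying V'(t) ≤ −(ε₁/λ) μ^{1+m}(t) V(t) for all t ∈ [t_*, t₀+T), where ε₁, λ > 0, m ≥ 1, and μ(t) = T/(T+t₀−t). Then V(t) ≤ V(t_*) · exp(−(ε₁ T/(m λ)) (μ^m(t) − μ^m(t_*))) for all t ∈ [t_*, t₀+T); in particular V(t) → 0 as t → t₀ + T. -/
/-!
With `g = (ε₁ T / (m λ)) μ^m` one has `g' = (ε₁ / λ) μ^{1+m}` because `μ' = μ² / T`, so the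
hypothesis reads `V' ≤ -g' V`. Hence `V · exp g` is antitone, which is the exponential bound, and
since `μ → ∞` at `t₀ + T` the bound squeezes the positive function `V` to `0`.
-/

open Set Filter Real

open Topology

theorem antitoneOn_mul_exp_of_deriv_le_neg_mul {V V' g g' : ℝ → ℝ} {a b : ℝ}
    (hV : ∀ t ∈ Ico a b, HasDerivAt V (V' t) t) (hg : ∀ t ∈ Ico a b, HasDerivAt g (g' t) t)
    (hle : ∀ t ∈ Ico a b, V' t ≤ -g' t * V t) :
    AntitoneOn (fun t => V t * exp (g t)) (Ico a b) := by
  have hW : ∀ t ∈ Ico a b, HasDerivAt (fun t => V t * exp (g t))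
      ((V' t + g' t * V t) * exp (g t)) t := fun t ht =>
    ((hV t ht).mul (hg t ht).exp).congr_deriv (by ring)
  refine antitoneOn_of_deriv_nonpos (convex_Ico a b)
    (fun t ht => (hW t ht).continuousAt.continuousWithinAt) ?_ ?_ <;> rw [interior_Ico]
  · exact fun t ht => (hW t (Ioo_subset_Ico_self ht)).differentiableAt.differentiableWithinAt
  · intro t ht
    have ht' := Ioo_subset_Ico_self ht
    rw [(hW t ht').deriv]
    exact mul_nonpos_of_nonpos_of_nonneg (by linarith [hle t ht']) (exp_pos _).le

theorem le_mul_exp_of_deriv_le_neg_mul {V V' g g' : ℝ → ℝ} {a b : ℝ}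
    (hV : ∀ t ∈ Ico a b, HasDerivAt V (V' t) t) (hg : ∀ t ∈ Ico a b, HasDerivAt g (g' t) t)
    (hle : ∀ t ∈ Ico a b, V' t ≤ -g' t * V t) {t : ℝ} (ht : t ∈ Ico a b) :
    V t ≤ V a * exp (-(g t - g a)) := by
  have hmono := antitoneOn_mul_exp_of_deriv_le_neg_mul hV hg hle
    (left_mem_Ico.2 (ht.1.trans_lt ht.2)) ht ht.1
  rw [neg_sub, exp_sub, mul_div_assoc', le_div_iff₀ (exp_pos _)]
  exact hmono

theorem hasDerivAt_div_sub_pow {c s t : ℝ} (hc : c ≠ 0) (ht : t ≠ s) (n : ℕ) :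
    HasDerivAt (fun t => (c / (s - t)) ^ n) (n / c * (c / (s - t)) ^ (n + 1)) t := by
  have h : HasDerivAt (fun t => c / (s - t)) (c / (s - t) ^ 2) t := by
    simpa [div_eq_mul_inv] using
      (((hasDerivAt_id t).const_sub s).inv (sub_ne_zero.2 ht.symm)).const_mul c
  refine (h.pow n).congr_deriv ?_
  rcases n with _ | n
  · simp
  · rw [Nat.add_sub_cancel, div_pow, div_pow]
    field_simp
    ring

theorem tendsto_div_sub_nhdsLT_atTop {c : ℝ} (hc : 0 < c) (s : ℝ) :
    Tendsto (fun t => c / (s - t)) (𝓝[<] s) atTop := by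
  have h : Tendsto (fun t => s - t) (𝓝[<] s) (𝓝[>] 0) :=
    ((continuous_const.sub continuous_id).tendsto' s 0 (sub_self s)).inf
      (tendsto_principal_principal.2 fun _ ht => sub_pos.2 (mem_Iio.1 ht))
  simpa [div_eq_mul_inv, Function.comp_def] using
    (tendsto_inv_nhdsGT_zero.const_mul_atTop hc).comp h

theorem tendsto_exp_neg_mul_div_sub_pow_sub {a c : ℝ} (ha : 0 < a) (hc : 0 < c) {n : ℕ}
    (hn : n ≠ 0) (s K : ℝ) :
    Tendsto (fun t => exp (-a * ((c / (s - t)) ^ n - K))) (𝓝[<] s) (𝓝 0) :=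
  tendsto_exp_atBot.comp <| Tendsto.const_mul_atTop_of_neg (neg_lt_zero.2 ha) <|
    tendsto_atTop_add_const_right _ _ <|
      (tendsto_pow_atTop hn).comp (tendsto_div_sub_nhdsLT_atTop hc s)

theorem lyapunov_decay_general (t₀ T : ℝ) (hT : 0 < T)
    (μ : ℝ → ℝ) (hμ : ∀ t, μ t = T / (T + t₀ - t))
    (tS : ℝ) (htS : tS ∈ Set.Ico t₀ (t₀ + T))
    (m : ℕ) (hm : 1 ≤ m) (ε₁ lam : ℝ) (hε₁ : 0 < ε₁) (hlam : 0 < lam)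
    (V V' : ℝ → ℝ)
    (hVpos : ∀ t ∈ Set.Ico tS (t₀ + T), 0 < V t)
    (hVderiv : ∀ t ∈ Set.Ico tS (t₀ + T), HasDerivAt V (V' t) t)
    (hVle : ∀ t ∈ Set.Ico tS (t₀ + T), V' t ≤ -(ε₁ / lam) * μ t ^ (1 + m) * V t) :
    (∀ t ∈ Set.Ico tS (t₀ + T),
      V t ≤ V tS * Real.exp (-(ε₁ * T / (m * lam)) * (μ t ^ m - μ tS ^ m))) ∧
    Tendsto V (nhdsWithin (t₀ + T) (Set.Iio (t₀ + T))) (nhds 0) := by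
  obtain rfl : μ = fun t => T / (T + t₀ - t) := funext hμ
  have hm0 : m ≠ 0 := Nat.one_le_iff_ne_zero.1 hm
  set c := ε₁ * T / (m * lam)
  have hg : ∀ t ∈ Ico tS (t₀ + T), HasDerivAt (fun t => c * (T / (T + t₀ - t)) ^ m)
      ((ε₁ / lam) * (T / (T + t₀ - t)) ^ (1 + m)) t := fun t ht =>
    ((hasDerivAt_div_sub_pow hT.ne' (by linarith [ht.2] : t < T + t₀).ne m).const_mul c
      ).congr_deriv (by simp only [c]; field_simp; ring)
  have hbound : ∀ t ∈ Ico tS (t₀ + T),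
      V t ≤ V tS * exp (-c * ((T / (T + t₀ - t)) ^ m - (T / (T + t₀ - tS)) ^ m)) := by
    intro t ht
    convert le_mul_exp_of_deriv_le_neg_mul hVderiv hg (fun s hs => by linarith [hVle s hs]) ht
      using 3
    ring
  refine ⟨hbound, ?_⟩
  have hIco : ∀ᶠ t in 𝓝[<] (T + t₀), t ∈ Ico tS (t₀ + T) := by
    rw [add_comm T t₀]
    exact Ico_mem_nhdsLT htS.2
  have hupper := (tendsto_exp_neg_mul_div_sub_pow_sub (by positivity : 0 < c) hT hm0
    (T + t₀) ((T / (T + t₀ - tS)) ^ m)).const_mul (V tS)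
  rw [mul_zero] at hupper
  rw [add_comm t₀ T]
  exact tendsto_of_tendsto_of_tendsto_of_le_of_le' tendsto_const_nhds hupper
    (hIco.mono fun t ht => (hVpos t ht).le) (hIco.mono hbound)

theorem lyapunov_decay (t₀ T : ℝ) (ht₀ : 0 ≤ t₀) (hT : 0 < T)
    (μ : ℝ → ℝ) (hμ : ∀ t, μ t = T / (T + t₀ - t))
    (tS : ℝ) (htS : tS ∈ Set.Ico t₀ (t₀ + T))
    (m : ℕ) (hm : 1 ≤ m) (ε₁ lam : ℝ) (hε₁ : 0 < ε₁) (hlam : 0 < lam)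
    (V V' : ℝ → ℝ)
    (hVpos : ∀ t ∈ Set.Ico tS (t₀ + T), 0 < V t)
    (hVderiv : ∀ t ∈ Set.Ico tS (t₀ + T), HasDerivAt V (V' t) t)
    (hVle : ∀ t ∈ Set.Ico tS (t₀ + T), V' t ≤ -(ε₁ / lam) * μ t ^ (1 + m) * V t) :
    (∀ t ∈ Set.Ico tS (t₀ + T),
      V t ≤ V tS * Real.exp (-(ε₁ * T / (m * lam)) * (μ t ^ m - μ tS ^ m))) ∧
    Tendsto V (nhdsWithin (t₀ + T) (Set.Iio (t₀ + T))) (nhds 0) :=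
  lyapunov_decay_general t₀ T hT μ hμ tS htS m hm ε₁ lam hε₁ hlam V V' hVpos hVderiv hVle
end

section
/- Let L be the Laplacian of a strongly connected weighted digraph, r the unique positive left null row vector of L with r 1_N = N, and R = diag(r₁,…,r_N). Then the matrix L̂ := R L + Lᵀ R is symmetric positive semi-definite and satisfies 1_Nᵀ L̂ = 0 and L̂ 1_N = 0. -/
/-!
Write `L = D - A` with `A = (aᵢⱼ)` and `D` the diagonal of its row sums. The matrix
`L̂ = R L + Lᵀ R` is symmetric, has zero row sums (`L 1 = 0` and `r L = 0`) and off-diagonal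
entries `-(rᵢ aᵢⱼ + rⱼ aⱼᵢ) ≤ 0`. It is therefore the Laplacian of an undirected graph with
nonnegative weights, and `xᵀ L̂ x = -½ ∑ᵢⱼ L̂ᵢⱼ (xᵢ - xⱼ)² ≥ 0`.
-/

open Matrix Finset

namespace Matrix

variable {ι : Type*} [Fintype ι]

theorem dotProduct_mulVec_eq_neg_half_sum_mul_sub_sq {M : Matrix ι ι ℝ} (hM : M.IsSymm)
    (h1 : M *ᵥ (fun _ => 1) = 0) (x : ι → ℝ) :
    x ⬝ᵥ (M *ᵥ x) = -(∑ i, ∑ j, M i j * (x i - x j) ^ 2) / 2 := by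
  have hrow : ∀ i, ∑ j, M i j = 0 := fun i => by simpa [mulVec, dotProduct] using congrFun h1 i
  have hsq : ∑ i, ∑ j, M i j * (x i - x j) ^ 2
      = ∑ i, x i ^ 2 * ∑ j, M i j + ∑ i, ∑ j, M i j * x j ^ 2 - 2 * (x ⬝ᵥ (M *ᵥ x)) := by
    simp only [dotProduct, mulVec, mul_sum, ← sum_add_distrib, ← sum_sub_distrib]
    exact sum_congr rfl fun i _ => sum_congr rfl fun j _ => by ring
  have hcol : ∑ i, ∑ j, M i j * x j ^ 2 = 0 := by
    rw [sum_comm]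
    simp only [← sum_mul, hM.apply, hrow, zero_mul, sum_const_zero]
  rw [hsq, hcol]
  simp only [hrow, mul_zero, sum_const_zero, zero_add]
  ring

theorem posSemidef_of_isSymm_of_mulVec_one_eq_zero {M : Matrix ι ι ℝ} (hM : M.IsSymm)
    (h1 : M *ᵥ (fun _ => 1) = 0) (hoff : ∀ i j, i ≠ j → M i j ≤ 0) : M.PosSemidef := by
  refine .of_dotProduct_mulVec_nonneg (isHermitian_iff_isSymm.mpr hM) fun x => ?_
  rw [star_trivial, dotProduct_mulVec_eq_neg_half_sum_mul_sub_sq hM h1]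
  have hterm : ∀ i j, M i j * (x i - x j) ^ 2 ≤ 0 := fun i j => by
    rcases eq_or_ne i j with rfl | hij
    · simp
    · exact mul_nonpos_of_nonpos_of_nonneg (hoff i j hij) (sq_nonneg _)
  have hsum : ∑ i, ∑ j, M i j * (x i - x j) ^ 2 ≤ 0 :=
    sum_nonpos fun i _ => sum_nonpos fun j _ => hterm i j
  linarith

variable [DecidableEq ι]

def weightedLaplacian (A : Matrix ι ι ℝ) : Matrix ι ι ℝ := diagonal (fun i => ∑ j, A i j) - A

theorem weightedLaplacian_mulVec_one (A : Matrix ι ι ℝ) :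
    weightedLaplacian A *ᵥ (fun _ => 1) = 0 := by
  rw [weightedLaplacian, sub_mulVec]
  ext i
  rw [Pi.sub_apply, mulVec_diagonal]
  simp [mulVec, dotProduct]

theorem weightedLaplacian_apply_of_ne {A : Matrix ι ι ℝ} {i j : ι} (hij : i ≠ j) :
    weightedLaplacian A i j = -A i j := by
  simp [weightedLaplacian, hij]

section Mirror

variable (r : ι → ℝ) (L : Matrix ι ι ℝ)

theorem isSymm_diagonal_mul_add_transpose_mul_diagonal :
    (diagonal r * L + Lᵀ * diagonal r).IsSymm := by
  simp only [IsSymm, transpose_add, transpose_mul, diagonal_transpose, transpose_transpose,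
    add_comm]

theorem diagonal_mul_add_transpose_mul_diagonal_mulVec_one
    (hL : L *ᵥ (fun _ => 1) = 0) (hrL : r ᵥ* L = 0) :
    (diagonal r * L + Lᵀ * diagonal r) *ᵥ (fun _ => 1) = 0 := by
  have hr : diagonal r *ᵥ (fun _ => 1) = r := by ext i; simp [mulVec_diagonal]
  rw [add_mulVec, ← mulVec_mulVec, ← mulVec_mulVec, hL, hr, mulVec_zero, mulVec_transpose, hrL,
    add_zero]

variable {r L}

theorem diagonal_mul_add_transpose_mul_diagonal_apply_nonpos (hr : ∀ i, 0 ≤ r i)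
    (hoff : ∀ i j, i ≠ j → L i j ≤ 0) {i j : ι} (hij : i ≠ j) :
    (diagonal r * L + Lᵀ * diagonal r) i j ≤ 0 := by
  rw [add_apply, diagonal_mul, mul_diagonal, transpose_apply]
  have := mul_nonpos_of_nonneg_of_nonpos (hr i) (hoff i j hij)
  have := mul_nonpos_of_nonpos_of_nonneg (hoff j i hij.symm) (hr j)
  linarith

end Mirror

end Matrix

theorem mirror_laplacian_psd_general (N : ℕ)
    (a : Fin N → Fin N → ℝ)
    (ha_nonneg : ∀ i j, 0 ≤ a i j)
    (ha_diag : ∀ i, a i i = 0)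
    (L : Matrix (Fin N) (Fin N) ℝ)
    (hL : ∀ i j, L i j = if i = j then (∑ k, a i k) else -a i j)
    (r : Fin N → ℝ) (hr_pos : ∀ i, 0 < r i)
    (hrL : Matrix.vecMul r L = 0)
    (R : Matrix (Fin N) (Fin N) ℝ) (hR : R = Matrix.diagonal r)
    (Lhat : Matrix (Fin N) (Fin N) ℝ) (hLhat : Lhat = R * L + Lᵀ * R) :
    Lhat.IsSymm ∧ Lhat.PosSemidef ∧
    Matrix.vecMul (fun _ => (1 : ℝ)) Lhat = 0 ∧
    Lhat.mulVec (fun _ => (1 : ℝ)) = 0 := by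
  have hLa : L = weightedLaplacian (of a) := by
    ext i j
    rcases eq_or_ne i j with rfl | hij
    · simp [hL, weightedLaplacian, ha_diag]
    · rw [hL, if_neg hij, weightedLaplacian_apply_of_ne hij, of_apply]
  have hoff : ∀ i j, i ≠ j → L i j ≤ 0 := fun i j hij => by
    simpa [hL, hij] using ha_nonneg i j
  subst hLhat hR
  have hsymm := isSymm_diagonal_mul_add_transpose_mul_diagonal r L
  have hone := diagonal_mul_add_transpose_mul_diagonal_mulVec_one r L
    (hLa ▸ weightedLaplacian_mulVec_one (of a)) hrL
  refine ⟨hsymm, posSemidef_of_isSymm_of_mulVec_one_eq_zero hsymm hone fun i j hij =>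
    diagonal_mul_add_transpose_mul_diagonal_apply_nonpos (fun i => (hr_pos i).le) hoff hij,
    ?_, hone⟩
  rw [← hsymm.eq, vecMul_transpose, hone]

theorem mirror_laplacian_psd (N : ℕ) (hN : 1 ≤ N)
    (a : Fin N → Fin N → ℝ)
    (ha_nonneg : ∀ i j, 0 ≤ a i j)
    (ha_diag : ∀ i, a i i = 0)
    (hconn : ∀ i j : Fin N, i ≠ j → Relation.TransGen (fun p q => 0 < a p q) i j)
    (L : Matrix (Fin N) (Fin N) ℝ)
    (hL : ∀ i j, L i j = if i = j then (∑ k, a i k) else -a i j)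
    (r : Fin N → ℝ) (hr_pos : ∀ i, 0 < r i)
    (hrL : Matrix.vecMul r L = 0) (hr_sum : (∑ i, r i) = N)
    (R : Matrix (Fin N) (Fin N) ℝ) (hR : R = Matrix.diagonal r)
    (Lhat : Matrix (Fin N) (Fin N) ℝ) (hLhat : Lhat = R * L + Lᵀ * R) :
    Lhat.IsSymm ∧ Lhat.PosSemidef ∧
    Matrix.vecMul (fun _ => (1 : ℝ)) Lhat = 0 ∧
    Lhat.mulVec (fun _ => (1 : ℝ)) = 0 :=
  mirror_laplacian_psd_general N a ha_nonneg ha_diag L hL r hr_pos hrL R hR Lhat hLhat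
end
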